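/- arXiv:2304.00443 — 7 statements merged into one kernel-verified Lean document; each statement's English description precedes it below -/
import Mathlib

section
/- Let a and b be positive integers with a ≥ 3, a odd and gcd(a,b) = 1, and let p be an integer with 0 ≤ p ≤ (a−1)/2. Then the p-Frobenius number of the triple {a, a+b, a+2b} equals (a−1)·b + a·(a−3)/2 + p·(a+2b). -/
/-- The denumerant `d(n; a, b, c)`: the number of triples `(x, y, z)` of nonnegative
integers with `x*a + y*b + z*c = n`. -/
noncomputable def denum3 (a b c n : ℕ) : ℕ :=
  Nat.card {t : ℕ × ℕ × ℕ // t.1 * a + t.2.1 * b + t.2.2 * c = n}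

private lemma sol_finite {A B C n : ℕ} (hA : 0 < A) (hB : 0 < B) (hC : 0 < C) :
    Finite {t : ℕ × ℕ × ℕ // t.1 * A + t.2.1 * B + t.2.2 * C = n} := by
  have key : ∀ t : {t : ℕ × ℕ × ℕ // t.1 * A + t.2.1 * B + t.2.2 * C = n},
      t.1.1 < n + 1 ∧ t.1.2.1 < n + 1 ∧ t.1.2.2 < n + 1 := by
    rintro ⟨⟨x, y, z⟩, h⟩
    have h1 : x ≤ x * A := Nat.le_mul_of_pos_right x hA
    have h2 : y ≤ y * B := Nat.le_mul_of_pos_right y hB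
    have h3 : z ≤ z * C := Nat.le_mul_of_pos_right z hC
    refine ⟨?_, ?_, ?_⟩ <;> simp only [] <;> linarith [h]
  apply Finite.of_injective (β := Fin (n+1) × Fin (n+1) × Fin (n+1))
    (fun t => (⟨t.1.1, (key t).1⟩, ⟨t.1.2.1, (key t).2.1⟩, ⟨t.1.2.2, (key t).2.2⟩))
  rintro ⟨⟨x, y, z⟩, h⟩ ⟨⟨x', y', z'⟩, h'⟩ hf
  simp only [Prod.mk.injEq, Fin.mk.injEq] at hf
  exact Subtype.ext (by simp [hf.1, hf.2.1, hf.2.2])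

private lemma rep_eq {A b s t z n : ℕ} (h2 : 2 * z ≤ t) (hzs : t - z ≤ s)
    (hn : A * s + t * b = n) :
    (s - (t - z)) * A + (t - 2 * z) * (A + b) + z * (A + 2 * b) = n := by
  obtain ⟨y, rfl⟩ : ∃ y, t = y + 2 * z := ⟨t - 2 * z, by omega⟩
  obtain ⟨x, hx⟩ : ∃ x, s = x + (y + z) := ⟨s - (y + z), by omega⟩
  subst hx
  have e1 : x + (y + z) - (y + 2 * z - z) = x := by omega
  have e2 : y + 2 * z - 2 * z = y := by omega
  rw [e1, e2, ← hn]; ring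

private lemma part1_key {e p b x y z : ℕ} (hb : 0 < b) (hp : p ≤ e + 1)
    (hab : Nat.gcd (2 * e + 3) b = 1)
    (h : x * (2 * e + 3) + y * (2 * e + 3 + b) + z * (2 * e + 3 + 2 * b)
        = (e + p) * (2 * e + 3) + (2 * e + 2 + 2 * p) * b) :
    y + 2 * z + 1 = 2 * p := by
  set s := x + y + z with hs
  set t := y + 2 * z with ht
  have hst : s * (2 * e + 3) + t * b
      = (e + p) * (2 * e + 3) + (2 * e + 2 + 2 * p) * b := by
    rw [← h, hs, ht]; ring
  -- t is strictly less than 2e+2+2p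
  have htub : t < 2 * e + 2 + 2 * p := by
    by_contra hc
    push_neg at hc
    have h2s : t ≤ 2 * s := by omega
    have m1 : (2 * e + 2 + 2 * p) * (2 * e + 3) ≤ t * (2 * e + 3) :=
      Nat.mul_le_mul_right _ hc
    have m2 : t * (2 * e + 3) ≤ (2 * s) * (2 * e + 3) := Nat.mul_le_mul_right _ h2s
    have m3 : (2 * e + 2 + 2 * p) * b ≤ t * b := Nat.mul_le_mul_right _ hc
    nlinarith [hst]
  -- t ≡ 2e+2+2p mod (2e+3)
  have h1 : t * b ≡ (2 * e + 2 + 2 * p) * b [MOD 2 * e + 3] := by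
    unfold Nat.ModEq
    calc t * b % (2 * e + 3) = (t * b + s * (2 * e + 3)) % (2 * e + 3) :=
          (Nat.add_mul_mod_self_right _ _ _).symm
      _ = ((2 * e + 2 + 2 * p) * b + (e + p) * (2 * e + 3)) % (2 * e + 3) := by
          rw [show t * b + s * (2 * e + 3) = s * (2 * e + 3) + t * b by ring, hst]; ring_nf
      _ = (2 * e + 2 + 2 * p) * b % (2 * e + 3) := Nat.add_mul_mod_self_right _ _ _
  have h2 : t ≡ 2 * e + 2 + 2 * p [MOD 2 * e + 3] :=
    Nat.ModEq.cancel_right_of_coprime hab h1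
  have h3 : t + 1 ≡ (2 * e + 2 + 2 * p) + 1 [MOD 2 * e + 3] := h2.add_right 1
  have h4 : (t + 1) % (2 * e + 3) = ((2 * e + 2 + 2 * p) + 1) % (2 * e + 3) := h3
  have hx : ((2 * e + 2 + 2 * p) + 1) % (2 * e + 3) = 2 * p % (2 * e + 3) := by
    rw [show (2 * e + 2 + 2 * p) + 1 = (2 * e + 3) + 2 * p by ring, Nat.add_mod_left]
  rw [hx] at h4
  have h5 : (2 * p) % (2 * e + 3) = 2 * p := Nat.mod_eq_of_lt (by omega)
  rw [h5] at h4
  rcases Nat.lt_or_ge (t + 1) (2 * e + 3) with hlt | hge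
  · rw [Nat.mod_eq_of_lt hlt] at h4; omega
  · rw [Nat.mod_eq_sub_mod hge, Nat.mod_eq_of_lt (by omega)] at h4
    omega

private lemma part2 {e p b n : ℕ} (hb : 0 < b) (hp : p ≤ e + 1)
    (hab : Nat.gcd (2 * e + 3) b = 1)
    (hn : (e + p) * (2 * e + 3) + (2 * e + 2 + 2 * p) * b < n) :
    p < denum3 (2 * e + 3) (2 * e + 3 + b) (2 * e + 3 + 2 * b) n := by
  haveI : NeZero (2 * e + 3) := ⟨by omega⟩
  haveI : Finite {t : ℕ × ℕ × ℕ //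
      t.1 * (2 * e + 3) + t.2.1 * (2 * e + 3 + b) + t.2.2 * (2 * e + 3 + 2 * b) = n} :=
    sol_finite (by omega) (by omega) (by omega)
  set t0 : ℕ := ((n : ZMod (2 * e + 3)) * ((b : ZMod (2 * e + 3)))⁻¹).val with ht0def
  have ht0 : t0 < 2 * e + 3 := ZMod.val_lt _
  have hcop : Nat.Coprime b (2 * e + 3) := Nat.coprime_comm.mp hab
  have hmod : t0 * b ≡ n [MOD 2 * e + 3] := by
    have hbinv : (b : ZMod (2 * e + 3)) * (b : ZMod (2 * e + 3))⁻¹ = 1 :=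
      ZMod.coe_mul_inv_eq_one b hcop
    have hcast : ((t0 * b : ℕ) : ZMod (2 * e + 3)) = ((n : ℕ) : ZMod (2 * e + 3)) := by
      push_cast
      rw [ht0def, ZMod.natCast_rightInverse _, mul_assoc, mul_comm _ (b : ZMod (2 * e + 3)),
        hbinv, mul_one]
    exact (ZMod.natCast_eq_natCast_iff _ _ _).mp hcast
  set c0 : ℕ := min (t0 / 2 + 1) (p + 1) with hc0def
  set K0 : ℕ := (t0 + 1) / 2 + c0 - 1 with hK0def
  have hK0 : t0 * b + (2 * e + 3) * K0
      ≤ ((e + p) * (2 * e + 3) + (2 * e + 2 + 2 * p) * b) + (2 * e + 3) := by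
    have m1 : t0 * b ≤ (2 * e + 2 + 2 * p) * b := Nat.mul_le_mul_right _ (by omega)
    have m2 : (2 * e + 3) * K0 ≤ (2 * e + 3) * (e + p + 1) :=
      Nat.mul_le_mul_left _ (by omega)
    nlinarith [m1, m2]
  have hbn : t0 * b ≤ n := by
    rcases Nat.eq_zero_or_pos t0 with h0 | h0
    · rw [h0]; simp
    · have h1 : 1 ≤ K0 := by omega
      have h2 : (2 * e + 3) * 1 ≤ (2 * e + 3) * K0 := Nat.mul_le_mul_left _ h1
      linarith [hK0, hn]
  have hdvd : (2 * e + 3) ∣ n - t0 * b := (Nat.modEq_iff_dvd' hbn).mp hmod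
  set s0 : ℕ := (n - t0 * b) / (2 * e + 3) with hs0def
  have hs0' : (2 * e + 3) * s0 + t0 * b = n := by
    rw [hs0def, Nat.mul_div_cancel' hdvd]; exact Nat.sub_add_cancel hbn
  have hs0K : K0 ≤ s0 := by
    have hlt : (2 * e + 3) * K0 < (2 * e + 3) * (s0 + 1) := by
      have hex : (2 * e + 3) * (s0 + 1) = (2 * e + 3) * s0 + (2 * e + 3) := by ring
      linarith [hK0, hn, hs0']
    have := Nat.lt_of_mul_lt_mul_left hlt
    omega
  -- class 1 data
  set t1 : ℕ := t0 + (2 * e + 3) with ht1def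
  have hmod1 : t1 * b ≡ n [MOD 2 * e + 3] := by
    have h1 : t1 * b % (2 * e + 3) = t0 * b % (2 * e + 3) := by
      rw [show t1 * b = t0 * b + b * (2 * e + 3) by rw [ht1def]; ring]
      exact Nat.add_mul_mod_self_right _ _ _
    exact h1.trans hmod
  have hK1 : c0 ≤ p → t1 * b + (2 * e + 3) * (e + p + 1)
      ≤ ((e + p) * (2 * e + 3) + (2 * e + 2 + 2 * p) * b) + (2 * e + 3) := by
    intro hcp
    have m1 : t1 * b ≤ (2 * e + 2 + 2 * p) * b := Nat.mul_le_mul_right _ (by omega)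
    have m2 : (2 * e + 3) * (e + p + 1) = (e + p) * (2 * e + 3) + (2 * e + 3) := by ring
    linarith [m1]
  have hbn1 : c0 ≤ p → t1 * b ≤ n := by
    intro hcp
    have h2 : (2 * e + 3) * 1 ≤ (2 * e + 3) * (e + p + 1) := Nat.mul_le_mul_left _ (by omega)
    linarith [hK1 hcp, hn]
  set s1 : ℕ := (n - t1 * b) / (2 * e + 3) with hs1def
  have hs1' : c0 ≤ p → (2 * e + 3) * s1 + t1 * b = n := by
    intro hcp
    have hd := (Nat.modEq_iff_dvd' (hbn1 hcp)).mp hmod1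
    rw [hs1def, Nat.mul_div_cancel' hd]; exact Nat.sub_add_cancel (hbn1 hcp)
  have hs1K : c0 ≤ p → e + p + 1 ≤ s1 := by
    intro hcp
    have hlt : (2 * e + 3) * (e + p + 1) < (2 * e + 3) * (s1 + 1) := by
      have hex : (2 * e + 3) * (s1 + 1) = (2 * e + 3) * s1 + (2 * e + 3) := by ring
      linarith [hK1 hcp, hn, hs1' hcp]
    have := Nat.lt_of_mul_lt_mul_left hlt
    omega
  -- the injection
  set triple : ℕ → ℕ × ℕ × ℕ := fun i =>
    if i < c0 then (s0 - (t0 - (t0 / 2 - i)), t0 - 2 * (t0 / 2 - i), t0 / 2 - i)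
    else (s1 - (t1 - (t1 / 2 - (i - c0))), t1 - 2 * (t1 / 2 - (i - c0)), t1 / 2 - (i - c0))
    with htriple
  have hsol : ∀ i : ℕ, i ≤ p →
      (triple i).1 * (2 * e + 3) + (triple i).2.1 * (2 * e + 3 + b)
        + (triple i).2.2 * (2 * e + 3 + 2 * b) = n := by
    intro i hip
    by_cases hic : i < c0
    · simp only [htriple, if_pos hic]
      exact rep_eq (by omega) (by omega) hs0'
    · have hcp : c0 ≤ p := by omega
      simp only [htriple, if_neg hic]
      exact rep_eq (by omega) (by have := hs1K hcp; omega) (hs1' hcp)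
  have hz : ∀ i j : ℕ, i ≤ p → j ≤ p → (triple i).2.2 = (triple j).2.2 → i = j := by
    intro i j hip hjp hzz
    by_cases hic : i < c0 <;> by_cases hjc : j < c0
    · simp only [htriple, if_pos hic, if_pos hjc] at hzz; omega
    · simp only [htriple, if_pos hic, if_neg hjc] at hzz
      have hcp : c0 ≤ p := by omega
      omega
    · simp only [htriple, if_neg hic, if_pos hjc] at hzz
      have hcp : c0 ≤ p := by omega
      omega
    · simp only [htriple, if_neg hic, if_neg hjc] at hzz
      have hcp : c0 ≤ p := by omega
      omega
  have hinj : ∃ g : Fin (p + 1) → {t : ℕ × ℕ × ℕ //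
      t.1 * (2 * e + 3) + t.2.1 * (2 * e + 3 + b) + t.2.2 * (2 * e + 3 + 2 * b) = n},
      Function.Injective g := by
    refine ⟨fun i => ⟨triple (i : ℕ), hsol (i : ℕ) (by omega)⟩, ?_⟩
    intro i j hij
    have h1 : triple (i : ℕ) = triple (j : ℕ) := congrArg Subtype.val hij
    have h2 : (triple (i : ℕ)).2.2 = (triple (j : ℕ)).2.2 := by rw [h1]
    exact Fin.ext (hz _ _ (by omega) (by omega) h2)
  obtain ⟨g, hg⟩ := hinj
  have hcard : p + 1 ≤ denum3 (2 * e + 3) (2 * e + 3 + b) (2 * e + 3 + 2 * b) n := by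
    have h1 : Nat.card (Fin (p + 1)) = p + 1 := by
      simp [Nat.card_eq_fintype_card]
    calc p + 1 = Nat.card (Fin (p + 1)) := h1.symm
      _ ≤ _ := Nat.card_le_card_of_injective g hg
  omega

/-- For odd `a ≥ 3` with `gcd(a,b) = 1` and `0 ≤ p ≤ (a-1)/2`, the `p`-Frobenius number
(the greatest natural number whose denumerant is at most `p`) of `{a, a+b, a+2b}`
is `(a-1)·b + a·(a-3)/2 + p·(a+2b)`. -/
theorem pFrobenius_triple_odd (a b : ℕ) (ha : 3 ≤ a) (haodd : Odd a) (hb : 0 < b)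
    (hab : Nat.gcd a b = 1) (p : ℕ) (hp : p ≤ (a - 1) / 2) :
    IsGreatest {n : ℕ | denum3 a (a + b) (a + 2 * b) n ≤ p}
      ((a - 1) * b + a * (a - 3) / 2 + p * (a + 2 * b)) := by
  obtain ⟨k, hk⟩ := haodd
  obtain ⟨e, he⟩ : ∃ e, a = 2 * e + 3 := ⟨(a - 3) / 2, by omega⟩
  subst he
  have hp' : p ≤ e + 1 := by omega
  have hN : (2 * e + 3 - 1) * b + (2 * e + 3) * (2 * e + 3 - 3) / 2 + p * (2 * e + 3 + 2 * b)
      = (e + p) * (2 * e + 3) + (2 * e + 2 + 2 * p) * b := by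
    have h1 : 2 * e + 3 - 1 = 2 * e + 2 := by omega
    have h2 : 2 * e + 3 - 3 = 2 * e := by omega
    rw [h1, h2]
    have h3 : (2 * e + 3) * (2 * e) = ((2 * e + 3) * e) * 2 := by ring
    rw [h3, Nat.mul_div_cancel _ two_pos]
    ring
  rw [hN]
  constructor
  · -- membership : denum3 at N is ≤ p
    show denum3 (2 * e + 3) (2 * e + 3 + b) (2 * e + 3 + 2 * b)
      ((e + p) * (2 * e + 3) + (2 * e + 2 + 2 * p) * b) ≤ p
    unfold denum3
    have hf : ∀ t : {t : ℕ × ℕ × ℕ // t.1 * (2 * e + 3) + t.2.1 * (2 * e + 3 + b)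
        + t.2.2 * (2 * e + 3 + 2 * b) = (e + p) * (2 * e + 3) + (2 * e + 2 + 2 * p) * b},
        t.1.2.2 < p := by
      rintro ⟨⟨x, y, z⟩, h⟩
      dsimp only at h ⊢
      have := part1_key hb hp' hab h
      omega
    have hinj : Function.Injective (fun t : {t : ℕ × ℕ × ℕ //
        t.1 * (2 * e + 3) + t.2.1 * (2 * e + 3 + b) + t.2.2 * (2 * e + 3 + 2 * b)
          = (e + p) * (2 * e + 3) + (2 * e + 2 + 2 * p) * b} =>
        (⟨t.1.2.2, hf t⟩ : Fin p)) := by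
      rintro ⟨⟨x, y, z⟩, h⟩ ⟨⟨x', y', z'⟩, h'⟩ hq
      simp only [Fin.mk.injEq] at hq
      dsimp only at h h' hq
      have k1 := part1_key hb hp' hab h
      have k2 := part1_key hb hp' hab h'
      have hzz : z = z' := hq
      have hyy : y = y' := by omega
      subst hzz; subst hyy
      have hxx : x = x' := by
        have := h.trans h'.symm
        have hx2 : x * (2 * e + 3) = x' * (2 * e + 3) := by omega
        exact Nat.eq_of_mul_eq_mul_right (by omega) hx2
      subst hxx; rfl
    calc Nat.card _ ≤ Nat.card (Fin p) := Nat.card_le_card_of_injective _ hinj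
      _ = p := by simp [Nat.card_eq_fintype_card]
  · -- upper bound
    intro n hn
    simp only [Set.mem_setOf_eq] at hn
    by_contra hcon
    push_neg at hcon
    have := part2 hb hp' hab hcon
    omega
end

section
/- Let a and b be positive integers with a ≥ 4, a even and gcd(a,b) = 1, and let p be an integer with 0 ≤ p ≤ a/2. Then the p-Frobenius number of the triple {a, a+b, a+2b} equals (a−1)·b + a·(a−2)/2 + p·(a+2b). -/
lemma exists_t0 (a b n : ℕ) (ha : 0 < a) (hab : Nat.gcd a b = 1) (hnb : (a-1)*b ≤ n) :
    ∃ t₀ s₀ : ℕ, t₀ < a ∧ s₀ * a + t₀ * b = n := by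
  haveI : NeZero a := ⟨ha.ne'⟩
  set u : ZMod a := (n : ZMod a) * (b : ZMod a)⁻¹ with hu
  set t₀ := u.val with ht₀
  have hlt : t₀ < a := ZMod.val_lt u
  have h1 : ((t₀ : ℕ) : ZMod a) = u := ZMod.natCast_rightInverse u
  have hunit : IsUnit (b : ZMod a) := by
    rw [ZMod.isUnit_iff_coprime]; exact Nat.Coprime.symm hab
  have h2 : ((b * t₀ : ℕ) : ZMod a) = (n : ZMod a) := by
    push_cast
    rw [h1, hu, mul_comm ((n : ZMod a)) _, ← mul_assoc, ZMod.mul_inv_of_unit _ hunit, one_mul]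
  have hmod : b * t₀ ≡ n [MOD a] := (ZMod.natCast_eq_natCast_iff _ _ _).mp h2
  have hle : b * t₀ ≤ n := by
    have : t₀ * b ≤ (a-1)*b := Nat.mul_le_mul_right _ (by omega)
    calc b * t₀ = t₀ * b := by ring
    _ ≤ (a-1)*b := this
    _ ≤ n := hnb
  obtain ⟨s₀, hs⟩ := (Nat.modEq_iff_dvd' hle).mp hmod
  refine ⟨t₀, s₀, hlt, ?_⟩
  have h3 : n = a * s₀ + b * t₀ := by rw [← Nat.sub_add_cancel hle, hs]
  rw [h3]; ring


lemma mk_sol {a b n S T x y z : ℕ} (hS : x + y + z = S) (hT : y + 2*z = T)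
    (hST : S*a + T*b = n) : x*a + y*(a+b) + z*(a+2*b) = n := by
  have h : x*a + y*(a+b) + z*(a+2*b) = (x+y+z)*a + (y+2*z)*b := by ring
  rw [h, hS, hT, hST]

lemma sum3_bound {x y z n : ℕ} (h : x + y + z = n) : x ≤ n ∧ y ≤ n ∧ z ≤ n := by omega

lemma finite_sols (A B C n : ℕ) (hA : 0 < A) (hB : 0 < B) (hC : 0 < C) :
    Finite {t : ℕ × ℕ × ℕ // t.1 * A + t.2.1 * B + t.2.2 * C = n} := by
  apply Finite.of_injective (β := Fin (n+1) × Fin (n+1) × Fin (n+1))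
    (fun t => (⟨t.1.1, by
        have hb := sum3_bound t.2
        have h1 : t.1.1 ≤ t.1.1 * A := Nat.le_mul_of_pos_right _ hA
        have := hb.1; omega⟩,
      ⟨t.1.2.1, by
        have hb := sum3_bound t.2
        have h1 : t.1.2.1 ≤ t.1.2.1 * B := Nat.le_mul_of_pos_right _ hB
        have := hb.2.1; omega⟩,
      ⟨t.1.2.2, by
        have hb := sum3_bound t.2
        have h1 : t.1.2.2 ≤ t.1.2.2 * C := Nat.le_mul_of_pos_right _ hC
        have := hb.2.2; omega⟩))
  rintro ⟨⟨x1,y1,z1⟩,e1⟩ ⟨⟨x2,y2,z2⟩,e2⟩ h12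
  simp only [Prod.mk.injEq, Fin.mk.injEq] at h12
  apply Subtype.ext
  simp only [Prod.mk.injEq]
  exact ⟨h12.1, h12.2.1, h12.2.2⟩

lemma keyN (b h p x y z : ℕ) (hh : 2 ≤ h) (hb : 0 < b)
    (hab : Nat.gcd (2*h) b = 1) (hp : p ≤ h)
    (heq : x*(2*h) + y*(2*h+b) + z*(2*h+2*b) = (2*h)*(h-1+p) + (2*h-1+2*p)*b) :
    y + 2*z + 1 = 2*p := by
  have hst : ((x:ℤ)+y+z)*(2*h) + ((y:ℤ)+2*z)*b
      = 2*(h:ℤ)*((h:ℤ)-1+p) + (2*(h:ℤ)-1+2*p)*b := by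
    zify [show 1 ≤ h by omega, show 1 ≤ 2*h by omega] at heq
    linear_combination heq
  have hcop : IsCoprime (2*(h:ℤ)) (b:ℤ) := by
    rw [Int.isCoprime_iff_gcd_eq_one]
    have e : (2*(h:ℤ)) = ((2*h:ℕ):ℤ) := by push_cast; ring
    rw [e, Int.gcd_natCast_natCast]
    exact hab
  have hdvd : (2*(h:ℤ)) ∣ ((y:ℤ)+2*z+1-2*p) := by
    apply hcop.dvd_of_dvd_mul_right
    exact ⟨(h:ℤ)-1+p+b-((x:ℤ)+y+z), by linear_combination hst⟩
  obtain ⟨j, hj⟩ := hdvd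
  have hj0 : j = 0 := by
    rcases lt_trichotomy j 0 with hjn | hj00 | hjp
    · exfalso
      have h1 : (j:ℤ) ≤ -1 := by omega
      have h2 : (2*(h:ℤ))*j ≤ (2*(h:ℤ))*(-1) :=
        mul_le_mul_of_nonneg_left h1 (by positivity)
      have hple : (p:ℤ) ≤ h := by exact_mod_cast hp
      have hy0 : (0:ℤ) ≤ y := Int.natCast_nonneg y
      have hz0 : (0:ℤ) ≤ z := Int.natCast_nonneg z
      have hh2 : (2:ℤ) ≤ h := by exact_mod_cast hh
      linarith [hj]
    · exact hj00
    · exfalso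
      have hs3 : ((x:ℤ)+y+z)*(2*h) = (2*(h:ℤ))*((h:ℤ)-1+p+(1-j)*b) := by
        linear_combination hst - (b:ℤ)*hj
      have hA : 0 ≤ ((j:ℤ)-1)*b := mul_nonneg (by omega) (Int.natCast_nonneg b)
      have hB : 0 ≤ ((j:ℤ)-1)*h := mul_nonneg (by omega) (Int.natCast_nonneg h)
      have hs4 : ((x:ℤ)+y+z) = (h:ℤ)-1+p+(1-j)*b := by
        have hne : (2*(h:ℤ)) ≠ 0 := by positivity
        apply mul_left_cancel₀ hne
        linarith [hs3]
      have hx0 : (0:ℤ) ≤ x := Int.natCast_nonneg x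
      have hy0 : (0:ℤ) ≤ y := Int.natCast_nonneg y
      have hb1 : (1:ℤ) ≤ b := by exact_mod_cast hb
      have hh2 : (2:ℤ) ≤ h := by exact_mod_cast hh
      linarith [hj, hs4, hA, hB]
  subst hj0
  simp only [mul_zero] at hj
  omega

lemma lower (b h p n : ℕ) (hh : 2 ≤ h) (hb : 0 < b)
    (hab : Nat.gcd (2*h) b = 1) (hp : p ≤ h)
    (hn : 2*h*(h-1+p) + (2*h-1+2*p)*b + 1 ≤ n) :
    p + 1 ≤ denum3 (2*h) (2*h+b) (2*h+2*b) n := by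
  unfold denum3
  haveI : Finite {t : ℕ × ℕ × ℕ // t.1 * (2*h) + t.2.1 * (2*h+b) + t.2.2 * (2*h+2*b) = n} :=
    finite_sols _ _ _ _ (by omega) (by omega) (by omega)
  obtain ⟨t₀, s₀, ht₀, hs₀⟩ := exists_t0 (2*h) b n (by omega) hab (by
    have h1 : (2*h-1)*b ≤ (2*h-1+2*p)*b := Nat.mul_le_mul_right _ (by omega)
    linarith [Nat.zero_le (2*h*(h-1+p))])
  have hs₀ge : h + p ≤ s₀ := by
    by_contra hc
    push_neg at hc
    have h1 : s₀*(2*h) ≤ (h+p-1)*(2*h) := Nat.mul_le_mul_right _ (by omega)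
    have h2 : t₀*b ≤ (2*h-1+2*p)*b := Nat.mul_le_mul_right _ (by omega)
    have h3 : (h+p-1)*(2*h) = 2*h*(h-1+p) := by
      zify [show 1 ≤ h+p by omega, show 1 ≤ h by omega]; ring
    linarith [hs₀, hn, h1, h2, h3]
  set q := t₀/2 with hq
  set r := t₀%2 with hr
  rcases le_or_gt (2*p) t₀ with hcase | hcase
  · -- Case A : take z = q - i, i = 0..p
    have main : ∀ i : Fin (p+1),
        (s₀ - (q+r+(i:ℕ)))*(2*h) + (r + 2*(i:ℕ))*(2*h+b) + (q - (i:ℕ))*(2*h+2*b) = n := by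
      intro i
      have hi := i.2
      exact mk_sol (by omega) (by omega) hs₀
    set f : Fin (p+1) → {t : ℕ × ℕ × ℕ // t.1 * (2*h) + t.2.1 * (2*h+b) + t.2.2 * (2*h+2*b) = n} :=
      fun i => ⟨(s₀ - (q+r+(i:ℕ)), r + 2*(i:ℕ), q - (i:ℕ)), main i⟩ with hf
    have hinj : Function.Injective f := by
      intro i₁ i₂ h12
      have hz : q - (i₁:ℕ) = q - (i₂:ℕ) := congrArg (fun t => t.1.2.2) h12
      have hi1 := i₁.2
      have hi2 := i₂.2
      exact Fin.ext (by omega)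
    calc p+1 = Nat.card (Fin (p+1)) := by simp
      _ ≤ _ := Nat.card_le_card_of_injective f hinj
  · -- Case B : t₀ < 2p
    have hs₀ge2 : h + p + b ≤ s₀ := by
      by_contra hc
      push_neg at hc
      have h1 : s₀*(2*h) ≤ (h+p+b-1)*(2*h) := Nat.mul_le_mul_right _ (by omega)
      have h2 : t₀*b ≤ (2*p-1)*b := Nat.mul_le_mul_right _ (by omega)
      have h3 : (h+p+b-1)*(2*h) + (2*p-1)*b = 2*h*(h-1+p) + (2*h-1+2*p)*b := by
        zify [show 1 ≤ h+p+b by omega, show 1 ≤ 2*p by omega, show 1 ≤ h by omega,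
          show 1 ≤ 2*h by omega]; ring
      linarith [hs₀, hn, h1, h2, h3]
    have hST' : (s₀ - b)*(2*h) + (t₀+2*h)*b = n := by
      have hb' : b ≤ s₀ := by omega
      have e : (s₀ - b)*(2*h) + (t₀+2*h)*b = s₀*(2*h) + t₀*b := by zify [hb']; ring
      rw [e]; exact hs₀
    have main : ∀ i : Fin (p+1),
        ((if (i:ℕ) ≤ q then (s₀ - t₀ + (i:ℕ), t₀ - 2*(i:ℕ), (i:ℕ))
          else (s₀ - (b+h+r+(i:ℕ)-1), r + 2*((i:ℕ) - q - 1), 2*q+h+1-(i:ℕ))) :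
            ℕ × ℕ × ℕ).1 * (2*h)
        + ((if (i:ℕ) ≤ q then (s₀ - t₀ + (i:ℕ), t₀ - 2*(i:ℕ), (i:ℕ))
          else (s₀ - (b+h+r+(i:ℕ)-1), r + 2*((i:ℕ) - q - 1), 2*q+h+1-(i:ℕ))) :
            ℕ × ℕ × ℕ).2.1 * (2*h+b)
        + ((if (i:ℕ) ≤ q then (s₀ - t₀ + (i:ℕ), t₀ - 2*(i:ℕ), (i:ℕ))
          else (s₀ - (b+h+r+(i:ℕ)-1), r + 2*((i:ℕ) - q - 1), 2*q+h+1-(i:ℕ))) :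
            ℕ × ℕ × ℕ).2.2 * (2*h+2*b) = n := by
      intro i
      have hi := i.2
      by_cases hiq : (i:ℕ) ≤ q
      · rw [if_pos hiq]
        exact mk_sol (by simp only; omega) (by simp only; omega) hs₀
      · rw [if_neg hiq]
        exact mk_sol (by simp only; omega) (by simp only; omega) hST'
    set f : Fin (p+1) → {t : ℕ × ℕ × ℕ // t.1 * (2*h) + t.2.1 * (2*h+b) + t.2.2 * (2*h+2*b) = n} :=
      fun i => ⟨(if (i:ℕ) ≤ q then (s₀ - t₀ + (i:ℕ), t₀ - 2*(i:ℕ), (i:ℕ))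
          else (s₀ - (b+h+r+(i:ℕ)-1), r + 2*((i:ℕ) - q - 1), 2*q+h+1-(i:ℕ))), main i⟩ with hf
    have hinj : Function.Injective f := by
      intro i₁ i₂ h12
      have hz : ((if (i₁:ℕ) ≤ q then (s₀ - t₀ + (i₁:ℕ), t₀ - 2*(i₁:ℕ), (i₁:ℕ))
          else (s₀ - (b+h+r+(i₁:ℕ)-1), r + 2*((i₁:ℕ) - q - 1), 2*q+h+1-(i₁:ℕ))) : ℕ × ℕ × ℕ).2.2
          = ((if (i₂:ℕ) ≤ q then (s₀ - t₀ + (i₂:ℕ), t₀ - 2*(i₂:ℕ), (i₂:ℕ))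
          else (s₀ - (b+h+r+(i₂:ℕ)-1), r + 2*((i₂:ℕ) - q - 1), 2*q+h+1-(i₂:ℕ))) : ℕ × ℕ × ℕ).2.2 :=
        congrArg (fun t => t.1.2.2) h12
      have hi1 := i₁.2
      have hi2 := i₂.2
      by_cases h1 : (i₁:ℕ) ≤ q <;> by_cases h2 : (i₂:ℕ) ≤ q <;>
        simp only [if_pos, if_neg, h1, h2, if_true, if_false] at hz <;>
        exact Fin.ext (by omega)
    calc p+1 = Nat.card (Fin (p+1)) := by simp
      _ ≤ _ := Nat.card_le_card_of_injective f hinj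


/-- For even `a ≥ 4` with `gcd(a,b) = 1` and `0 ≤ p ≤ a/2`, the `p`-Frobenius number
(the greatest natural number whose denumerant is at most `p`) of `{a, a+b, a+2b}`
is `(a-1)·b + a·(a-2)/2 + p·(a+2b)`. -/
theorem pFrobenius_triple_even (a b : ℕ) (ha : 4 ≤ a) (haeven : Even a) (hb : 0 < b)
    (hab : Nat.gcd a b = 1) (p : ℕ) (hp : p ≤ a / 2) :
    IsGreatest {n : ℕ | denum3 a (a + b) (a + 2 * b) n ≤ p}
      ((a - 1) * b + a * (a - 2) / 2 + p * (a + 2 * b)) := by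
  obtain ⟨h, rfl⟩ : ∃ h, a = 2*h := ⟨a/2, by
    have := Nat.even_iff.mp haeven; omega⟩
  have hh : 2 ≤ h := by omega
  have hp' : p ≤ h := by omega
  have hNval : (2*h - 1) * b + 2*h * (2*h - 2) / 2 + p * (2*h + 2 * b)
      = (2*h)*(h-1+p) + (2*h-1+2*p)*b := by
    have e1 : 2*h*(2*h-2) = 2*(h*(2*h-2)) := by ring
    rw [e1, Nat.mul_div_cancel_left _ (by norm_num)]
    zify [show 1 ≤ 2*h by omega, show 2 ≤ 2*h by omega, show 1 ≤ h by omega]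
    ring
  constructor
  · -- membership : denum3 of N is ≤ p
    simp only [Set.mem_setOf_eq]
    unfold denum3
    haveI : Finite {t : ℕ × ℕ × ℕ //
        t.1 * (2*h) + t.2.1 * (2*h + b) + t.2.2 * (2*h + 2*b)
          = (2*h - 1) * b + 2*h * (2*h - 2) / 2 + p * (2*h + 2 * b)} :=
      finite_sols _ _ _ _ (by omega) (by omega) (by omega)
    have key : ∀ x y z : ℕ,
        x * (2*h) + y * (2*h + b) + z * (2*h + 2*b)
          = (2*h - 1) * b + 2*h * (2*h - 2) / 2 + p * (2*h + 2 * b) →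
        y + 2*z + 1 = 2*p := by
      intro x y z hxyz
      rw [hNval] at hxyz
      exact keyN b h p x y z hh hb hab hp' hxyz
    set fN : {t : ℕ × ℕ × ℕ //
        t.1 * (2*h) + t.2.1 * (2*h + b) + t.2.2 * (2*h + 2*b)
          = (2*h - 1) * b + 2*h * (2*h - 2) / 2 + p * (2*h + 2 * b)} → Fin p :=
      fun t => ⟨t.1.2.2, by
        have := key t.1.1 t.1.2.1 t.1.2.2 t.2
        omega⟩ with hfN
    have hinj : Function.Injective fN := by
      rintro ⟨⟨x₁,y₁,z₁⟩,e₁⟩ ⟨⟨x₂,y₂,z₂⟩,e₂⟩ h12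
      have hz : z₁ = z₂ := congrArg Fin.val h12
      have k₁ := key x₁ y₁ z₁ e₁
      have k₂ := key x₂ y₂ z₂ e₂
      have hy : y₁ = y₂ := by omega
      have hx : x₁ = x₂ := by
        subst hz hy
        have e3 := e₁.trans e₂.symm
        have e4 : x₁ * (2*h) = x₂ * (2*h) := by
          exact Nat.add_right_cancel (Nat.add_right_cancel e3)
        exact Nat.eq_of_mul_eq_mul_right (by omega) e4
      apply Subtype.ext
      simp only [Prod.mk.injEq]
      exact ⟨hx, hy, hz⟩
    calc Nat.card _ ≤ Nat.card (Fin p) := Nat.card_le_card_of_injective fN hinj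
      _ = p := by simp
  · -- upper bound
    intro n hn
    simp only [Set.mem_setOf_eq] at hn
    by_contra hlt
    push_neg at hlt
    rw [hNval] at hlt
    have hlow := lower b h p n hh hb hab hp' (by omega)
    omega
end

section
/- Let k ≥ 2 and let a₁,…,a_k be positive integers with gcd(a₁,…,a_k) = 1 and a₁ = min(a₁,…,a_k), and let p be a nonnegative integer. Then a₁ times the p-genus n_p(a₁,…,a_k) equals (Σ_{j=0}^{a₁−1} m_j^{(p)}) − a₁·(a₁−1)/2, where m_j^{(p)} is the least element of S_p(a₁,…,a_k) congruent to j modulo a₁ (with m_0^{(0)} = 0). -/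
/-!
Raising `x 0` by one injects the representations of `n` into those of `n + a 0`, so
`S = {n | p < denum k a n}` is closed under adding `a 0`. Hence the gaps of `S` in the
residue class `j` are exactly `j, j + a 0, …, m j - a 0`, which are `(m j - j) / a 0` numbers;
summing over `j` gives `a 0 * #gaps = ∑ m j - ∑ j`.
-/

/-- The denumerant `d(n; a 0, …, a (k-1))`: the number of tuples `x` of nonnegative
integers with `x 0 * a 0 + ⋯ + x (k-1) * a (k-1) = n`. -/
noncomputable def denum (k : ℕ) (a : ℕ → ℕ) (n : ℕ) : ℕ :=
  Nat.card {x : Fin k → ℕ // ∑ i : Fin k, x i * a i.1 = n}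

open Finset

section Denumerant

variable {k : ℕ} {a : ℕ → ℕ}

theorem finite_denum_solutions (hapos : ∀ i < k, 0 < a i) (n : ℕ) :
    Finite {x : Fin k → ℕ // ∑ i : Fin k, x i * a i.1 = n} := by
  refine (Set.finite_Iic (fun _ : Fin k => n)).subset (fun x hx i => ?_) |>.to_subtype
  calc x i ≤ x i * a i.1 := Nat.le_mul_of_pos_right _ (hapos i.1 i.2)
    _ ≤ ∑ j : Fin k, x j * a j.1 :=
      single_le_sum (f := fun j : Fin k => x j * a j.1) (fun _ _ => Nat.zero_le _) (mem_univ i)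
    _ = n := hx

theorem denum_le_denum_add (hapos : ∀ i < k, 0 < a i) {i : ℕ} (hi : i < k) (n : ℕ) :
    denum k a n ≤ denum k a (n + a i) := by
  have := finite_denum_solutions hapos (n + a i)
  refine Nat.card_le_card_of_injective
    (fun x => ⟨x.1 + Pi.single ⟨i, hi⟩ 1, ?_⟩) fun x y hxy => ?_
  · simp [add_mul, sum_add_distrib, x.2, Pi.single_apply]
  · exact Subtype.ext (add_right_cancel (congrArg Subtype.val hxy))

end Denumerant

theorem Nat.lt_iff_div_lt_div_of_mod_eq {A n r : ℕ} (h : n % A = r % A) :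
    n < r ↔ n / A < r / A := by
  have hn := Nat.div_add_mod n A
  have hr := Nat.div_add_mod r A
  constructor
  · intro hlt
    by_contra! hle
    have := Nat.mul_le_mul_left A hle
    omega
  · intro hlt
    by_contra! hle
    exact (Nat.div_le_div_right hle).not_gt hlt

theorem mul_sum_div_eq_sum_sub {A : ℕ} {m : ℕ → ℕ} (hmod : ∀ j < A, m j % A = j) :
    (A : ℤ) * ∑ j ∈ range A, ((m j / A : ℕ) : ℤ)
      = ∑ j ∈ range A, (m j : ℤ) - A * (A - 1) / 2 := by
  have hterm : ∀ j ∈ range A, (A : ℤ) * ((m j / A : ℕ) : ℤ) = m j - j := by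
    intro j hj
    have := Nat.div_add_mod (m j) A
    rw [hmod j (mem_range.mp hj)] at this
    omega
  have hgauss : (A : ℤ) * (A - 1) / 2 = ∑ j ∈ range A, (j : ℤ) := by
    refine Int.ediv_eq_of_eq_mul_left two_ne_zero ?_
    rcases A.eq_zero_or_pos with rfl | hA
    · simp
    · have := congrArg (Nat.cast : ℕ → ℤ) (sum_range_id_mul_two A)
      push_cast [Nat.cast_sub hA] at this
      exact this.symm
  rw [mul_sum, sum_congr rfl hterm, sum_sub_distrib, hgauss]

section AperySet

variable {A : ℕ} {S : Set ℕ} {m : ℕ → ℕ}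

theorem add_mul_mem_of_add_mem (hS : ∀ n ∈ S, n + A ∈ S) {n : ℕ} (hn : n ∈ S) (t : ℕ) :
    n + A * t ∈ S := by
  induction t with
  | zero => simpa using hn
  | succ t ih => simpa [mul_add, ← add_assoc] using hS _ ih

variable (hA : 0 < A) (hS : ∀ n ∈ S, n + A ∈ S)
  (hm : ∀ j < A, IsLeast {n | n ∈ S ∧ n % A = j} (m j))
include hA hS hm

theorem mem_iff_apery_le (n : ℕ) : n ∈ S ↔ m (n % A) ≤ n := by
  have hj := Nat.mod_lt n hA
  refine ⟨fun hn => (hm _ hj).2 ⟨hn, rfl⟩, fun hle => ?_⟩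
  obtain ⟨t, ht⟩ := (Nat.modEq_iff_dvd' hle).mp (hm _ hj).1.2
  rw [show n = m (n % A) + A * t by omega]
  exact add_mul_mem_of_add_mem hS (hm _ hj).1.1 t

theorem compl_eq_image_sigma :
    Sᶜ = ↑(((range A).sigma fun j => range (m j / A)).image fun x => A * x.2 + x.1) := by
  ext n
  simp only [Set.mem_compl_iff, mem_iff_apery_le hA hS hm, not_le, coe_image, Set.mem_image,
    mem_coe, mem_sigma, mem_range]
  constructor
  · intro hn
    refine ⟨⟨n % A, n / A⟩, ⟨Nat.mod_lt n hA, ?_⟩, Nat.div_add_mod n A⟩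
    exact (Nat.lt_iff_div_lt_div_of_mod_eq ((hm _ (Nat.mod_lt n hA)).1.2.symm)).mp hn
  · rintro ⟨⟨j, t⟩, ⟨hj, ht⟩, rfl⟩
    have hmod : (A * t + j) % A = j := by rw [Nat.mul_add_mod, Nat.mod_eq_of_lt hj]
    rw [hmod, Nat.lt_iff_div_lt_div_of_mod_eq (hmod.trans (hm j hj).1.2.symm),
      Nat.mul_add_div hA, Nat.div_eq_of_lt hj]
    simpa using ht

theorem ncard_compl_eq_sum_div : Sᶜ.ncard = ∑ j ∈ range A, m j / A := by
  rw [compl_eq_image_sigma hA hS hm, Set.ncard_coe_finset, card_image_of_injOn, card_sigma]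
  · simp
  rintro ⟨j, t⟩ hx ⟨j', t'⟩ hy h
  simp only [coe_sigma, Set.mem_sigma_iff, coe_range, Set.mem_Iio] at hx hy h
  have hmod := congrArg (· % A) h
  have hdiv := congrArg (· / A) h
  simp only [Nat.mul_add_mod, Nat.mod_eq_of_lt hx.1, Nat.mod_eq_of_lt hy.1, Nat.mul_add_div hA,
    Nat.div_eq_of_lt hx.1, Nat.div_eq_of_lt hy.1, add_zero] at hmod hdiv
  subst hmod hdiv
  rfl

theorem mul_ncard_compl_eq_sum_apery :
    (A : ℤ) * Sᶜ.ncard = ∑ j ∈ range A, (m j : ℤ) - A * (A - 1) / 2 := by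
  rw [ncard_compl_eq_sum_div hA hS hm, Nat.cast_sum]
  exact mul_sum_div_eq_sum_sub fun j hj => (hm j hj).1.2

end AperySet

theorem pGenus_eq_sum_apery_general (k : ℕ) (hk : 2 ≤ k) (a : ℕ → ℕ)
    (hapos : ∀ i < k, 0 < a i)
    (p : ℕ) (m : ℕ → ℕ)
    (hm : ∀ j < a 0, IsLeast {n : ℕ | p < denum k a n ∧ n % a 0 = j} (m j)) :
    (a 0 : ℤ) * ({n : ℕ | denum k a n ≤ p}.ncard : ℤ)
      = (∑ j ∈ Finset.range (a 0), (m j : ℤ))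
        - (a 0 : ℤ) * ((a 0 : ℤ) - 1) / 2 := by
  have hk0 : 0 < k := by omega
  have hgap : {n : ℕ | denum k a n ≤ p} = {n | p < denum k a n}ᶜ := by
    ext n
    simp
  rw [hgap]
  exact mul_ncard_compl_eq_sum_apery (hapos 0 hk0)
    (fun n hn => hn.trans_le (denum_le_denum_add hapos hk0 n)) hm

/-- Lemma 1 (formula (2)): the least generator times the `p`-genus (the cardinality of
the set of natural numbers whose denumerant is at most `p`) equals the sum of the
`p`-Apéry set elements minus `a₁(a₁-1)/2`. -/
theorem pGenus_eq_sum_apery (k : ℕ) (hk : 2 ≤ k) (a : ℕ → ℕ)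
    (hapos : ∀ i < k, 0 < a i)
    (hgcd : (Finset.range k).gcd a = 1)
    (hmin : ∀ i < k, a 0 ≤ a i)
    (p : ℕ) (m : ℕ → ℕ)
    (hm : ∀ j < a 0, IsLeast {n : ℕ | p < denum k a n ∧ n % a 0 = j} (m j)) :
    (a 0 : ℤ) * ({n : ℕ | denum k a n ≤ p}.ncard : ℤ)
      = (∑ j ∈ Finset.range (a 0), (m j : ℤ))
        - (a 0 : ℤ) * ((a 0 : ℤ) - 1) / 2 :=
  pGenus_eq_sum_apery_general k hk a hapos p m hm
end

section
/- Let k ≥ 2 and let a₁,…,a_k be positive integers with gcd(a₁,…,a_k) = 1 and a₁ = min(a₁,…,a_k), and let p be a nonnegative integer. Then 12·a₁ times the p-Sylvester sum s_p(a₁,…,a_k) equals 6·Σ_{j=0}^{a₁−1} (m_j^{(p)})² − 6·a₁·Σ_{j=0}^{a₁−1} m_j^{(p)} + a₁·(a₁²−1), where m_j^{(p)} is the least element of S_p(a₁,…,a_k) congruent to j modulo a₁ (with m_0^{(0)} = 0). -/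
lemma denum_finite (k : ℕ) (a : ℕ → ℕ) (hapos : ∀ i < k, 0 < a i) (n : ℕ) :
    Finite {x : Fin k → ℕ // ∑ i : Fin k, x i * a i.1 = n} := by
  apply Finite.of_injective (fun x => (fun i => (⟨x.1 i, by
    have h1 : x.1 i * a i.1 ≤ ∑ j : Fin k, x.1 j * a j.1 :=
      Finset.single_le_sum (f := fun j : Fin k => x.1 j * a j.1) (fun j _ => Nat.zero_le _)
        (Finset.mem_univ i)
    have h2 : x.1 i ≤ x.1 i * a i.1 := Nat.le_mul_of_pos_right _ (hapos i.1 i.2)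
    have := x.2
    omega⟩ : Fin (n+1))) : _ → Fin k → Fin (n+1))
  intro x y h
  apply Subtype.ext
  funext i
  exact congrArg Fin.val (congrFun h i)

lemma denum_step (k : ℕ) (hk : 2 ≤ k) (a : ℕ → ℕ) (hapos : ∀ i < k, 0 < a i) (n : ℕ) :
    denum k a n ≤ denum k a (n + a 0) := by
  have : Finite {x : Fin k → ℕ // ∑ i : Fin k, x i * a i.1 = n + a 0} :=
    denum_finite k a hapos _
  set i0 : Fin k := ⟨0, by omega⟩ with hi0
  apply Nat.card_le_card_of_injective
    (fun x => (⟨fun i => if i = i0 then x.1 i + 1 else x.1 i, by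
      have hx := x.2
      calc ∑ i : Fin k, (if i = i0 then x.1 i + 1 else x.1 i) * a i.1
          = ∑ i : Fin k, (x.1 i * a i.1 + if i = i0 then a i.1 else 0) := by
            apply Finset.sum_congr rfl
            intro i _
            split <;> ring
        _ = n + a 0 := by
            rw [Finset.sum_add_distrib, hx, Finset.sum_ite_eq' Finset.univ i0]
            simp [hi0]⟩ : {x : Fin k → ℕ // ∑ i : Fin k, x i * a i.1 = n + a 0}))
  intro x y h
  apply Subtype.ext
  funext i
  have := congrFun (congrArg Subtype.val h) i
  simp only at this
  split at this <;> omega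

lemma gauss1 (q : ℕ) : 2 * (∑ t ∈ Finset.range q, (t : ℤ)) = q * (q - 1) := by
  induction q with
  | zero => simp
  | succ n ih => rw [Finset.sum_range_succ]; push_cast; push_cast at ih; ring_nf; ring_nf at ih; linarith

lemma gauss2 (q : ℕ) : 6 * (∑ t ∈ Finset.range q, (t : ℤ)^2) = q * (q - 1) * (2*q - 1) := by
  induction q with
  | zero => simp
  | succ n ih => rw [Finset.sum_range_succ]; push_cast; push_cast at ih; ring_nf; ring_nf at ih; linarith

/-- Lemma 1 (formula (3)): `12·a₁` times the `p`-Sylvester sum (the sum of the natural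
numbers whose denumerant is at most `p`) equals
`6·Σ (m_j)² − 6·a₁·Σ m_j + a₁·(a₁²−1)`. -/
theorem pSylvester_eq_apery_sums (k : ℕ) (hk : 2 ≤ k) (a : ℕ → ℕ)
    (hapos : ∀ i < k, 0 < a i)
    (hgcd : (Finset.range k).gcd a = 1)
    (hmin : ∀ i < k, a 0 ≤ a i)
    (p : ℕ) (m : ℕ → ℕ)
    (hm : ∀ j < a 0, IsLeast {n : ℕ | p < denum k a n ∧ n % a 0 = j} (m j)) :
    12 * (a 0 : ℤ) * (∑ᶠ n ∈ {n : ℕ | denum k a n ≤ p}, (n : ℤ))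
      = 6 * (∑ j ∈ Finset.range (a 0), (m j : ℤ) ^ 2)
        - 6 * (a 0 : ℤ) * (∑ j ∈ Finset.range (a 0), (m j : ℤ))
        + (a 0 : ℤ) * ((a 0 : ℤ) ^ 2 - 1) := by
  classical
  have ha0 : 0 < a 0 := hapos 0 (by omega)
  -- above m_j implies big denumerant
  have hB : ∀ n : ℕ, m (n % a 0) ≤ n → p < denum k a n := by
    intro n
    induction n using Nat.strong_induction_on with
    | _ n ih =>
      intro hle
      have hj : n % a 0 < a 0 := Nat.mod_lt _ ha0
      obtain ⟨⟨hd, hmod⟩, hleast⟩ := hm (n % a 0) hj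
      rcases eq_or_lt_of_le hle with heq | hlt
      · exact heq ▸ hd
      · have hdvd : a 0 ∣ n - m (n % a 0) :=
          (Nat.modEq_iff_dvd' hle).mp (hmod.trans rfl)
        have hge : a 0 ≤ n - m (n % a 0) := Nat.le_of_dvd (by omega) hdvd
        have hkey : n - a 0 + a 0 = n := by omega
        have hmod2 : (n - a 0) % a 0 = n % a 0 := by
          conv_rhs => rw [← hkey]
          rw [Nat.add_mod_right]
        have hrec : p < denum k a (n - a 0) := by
          apply ih (n - a 0) (by omega)
          rw [hmod2]; omega
        have := denum_step k hk a hapos (n - a 0)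
        rw [hkey] at this
        omega
  -- characterization of the complement
  have hC : ∀ n : ℕ, denum k a n ≤ p ↔ n < m (n % a 0) := by
    intro n
    have hj : n % a 0 < a 0 := Nat.mod_lt _ ha0
    obtain ⟨⟨hd, hmod⟩, hleast⟩ := hm (n % a 0) hj
    constructor
    · intro h
      by_contra hcon
      exact absurd (hB n (by omega)) (by omega)
    · intro h
      by_contra hcon
      exact absurd (hleast ⟨by omega, rfl⟩) (by omega)
  set N : ℕ := (Finset.range (a 0)).sup m + 1 with hN
  have hlift : ∀ n : ℕ, denum k a n ≤ p → n < N := by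
    intro n h
    have h1 := (hC n).mp h
    have h2 : m (n % a 0) ≤ (Finset.range (a 0)).sup m :=
      Finset.le_sup (Finset.mem_range.mpr (Nat.mod_lt _ ha0))
    omega
  set F : Finset ℕ := (Finset.range N).filter (fun n => denum k a n ≤ p) with hF
  have hCF : {n : ℕ | denum k a n ≤ p} = (↑F : Set ℕ) := by
    ext n
    simp only [Set.mem_setOf_eq, hF, Finset.coe_filter, Finset.mem_range, Set.mem_setOf_eq]
    exact ⟨fun h => ⟨hlift n h, h⟩, fun h => h.2⟩
  rw [hCF, finsum_mem_coe_finset]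
  -- the quotients
  set q : ℕ → ℕ := fun j => m j / a 0 with hq
  have hmj : ∀ j < a 0, m j = j + a 0 * q j := by
    intro j hjlt
    obtain ⟨⟨hd, hmod⟩, hleast⟩ := hm j hjlt
    have := Nat.mod_add_div (m j) (a 0)
    simp only [hq]
    omega
  -- reindex the sum over F by (j, t) ↦ j + a0 * t
  have hsum : ∑ n ∈ F, (n : ℤ)
      = ∑ x ∈ (Finset.range (a 0)).sigma (fun j => Finset.range (q j)),
          ((x.1 : ℤ) + (a 0 : ℤ) * x.2) := by
    apply Finset.sum_nbij' (i := fun n => (⟨n % a 0, n / a 0⟩ : Σ _ : ℕ, ℕ))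
      (j := fun x => x.1 + a 0 * x.2)
    · intro n hn
      simp only [hF, Finset.mem_filter, Finset.mem_range] at hn
      have h1 := (hC n).mp hn.2
      have hjlt : n % a 0 < a 0 := Nat.mod_lt _ ha0
      simp only [Finset.mem_sigma, Finset.mem_range]
      refine ⟨hjlt, ?_⟩
      have h2 := hmj _ hjlt
      have h3 := Nat.mod_add_div n (a 0)
      by_contra hcon
      push_neg at hcon
      have : a 0 * q (n % a 0) ≤ a 0 * (n / a 0) := Nat.mul_le_mul_left _ hcon
      omega
    · intro x hx
      simp only [Finset.mem_sigma, Finset.mem_range] at hx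
      obtain ⟨hj, ht⟩ := hx
      have hmodx : (x.1 + a 0 * x.2) % a 0 = x.1 := by
        rw [Nat.add_mul_mod_self_left, Nat.mod_eq_of_lt hj]
      have hlt : x.1 + a 0 * x.2 < m x.1 := by
        have h2 := hmj _ hj
        have : a 0 * x.2 < a 0 * q x.1 := (Nat.mul_lt_mul_left ha0).mpr ht
        omega
      have hle : denum k a (x.1 + a 0 * x.2) ≤ p := by
        rw [hC, hmodx]; exact hlt
      simp only [hF, Finset.mem_filter, Finset.mem_range]
      exact ⟨hlift _ hle, hle⟩
    · intro n hn
      exact Nat.mod_add_div n (a 0)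
    · rintro ⟨j, t⟩ hx
      simp only [Finset.mem_sigma, Finset.mem_range] at hx
      obtain ⟨hj, ht⟩ := hx
      have hmodx : (j + a 0 * t) % a 0 = j := by
        rw [Nat.add_mul_mod_self_left, Nat.mod_eq_of_lt hj]
      have hdivx : (j + a 0 * t) / a 0 = t := by
        rw [Nat.add_mul_div_left _ _ ha0, Nat.div_eq_of_lt hj, Nat.zero_add]
      simp only [hmodx, hdivx]
    · intro n hn
      conv_lhs => rw [← Nat.mod_add_div n (a 0)]
      push_cast
      ring
  rw [hsum, Finset.sum_sigma]
  -- per-residue identity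
  have key : ∀ j ∈ Finset.range (a 0),
      12 * (a 0 : ℤ) * (∑ t ∈ Finset.range (q j), ((j : ℤ) + (a 0 : ℤ) * t))
        = (6 * (m j : ℤ)^2 - 6 * (a 0 : ℤ) * (m j : ℤ))
          - (6 * (j : ℤ)^2 - 6 * (a 0 : ℤ) * (j : ℤ)) := by
    intro j hjr
    have hjlt := Finset.mem_range.mp hjr
    have h2 : (m j : ℤ) = (j : ℤ) + (a 0 : ℤ) * (q j : ℤ) := by
      have := hmj j hjlt; push_cast [this]; ring
    rw [Finset.sum_add_distrib, Finset.sum_const, Finset.card_range, ← Finset.mul_sum, h2]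
    have hg := gauss1 (q j)
    push_cast
    linear_combination 6 * (a 0 : ℤ)^2 * hg
  have hconst : ∑ j ∈ Finset.range (a 0), (6 * (j : ℤ)^2 - 6 * (a 0 : ℤ) * (j : ℤ))
      = -((a 0 : ℤ) * ((a 0 : ℤ)^2 - 1)) := by
    have hg1 := gauss1 (a 0)
    have hg2 := gauss2 (a 0)
    rw [Finset.sum_sub_distrib]
    rw [← Finset.mul_sum, ← Finset.mul_sum]
    linear_combination hg2 - 3 * (a 0 : ℤ) * hg1
  rw [Finset.mul_sum]
  rw [Finset.sum_congr rfl key]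
  rw [Finset.sum_sub_distrib, hconst, Finset.sum_sub_distrib, ← Finset.mul_sum, ← Finset.mul_sum]
  ring
end

section
/- Let v, a, b, k be positive integers with a ≥ 3, k ≥ 3 and gcd(a,b) = 1. Set q = ⌊a/J_k(v)⌋ and r = a − q·J_k(v), and define t_{y,z} = y·(va+b) + z·(v·a·J_{k−1}(v) + b·J_k(v)). Then the a integers t_{y,z} for 0 ≤ z ≤ q−1, 0 ≤ y ≤ J_k(v)−1, together with t_{y,q} for 0 ≤ y ≤ r−1, are pairwise incongruent modulo a; that is, they form a complete residue system modulo a. -/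
/-- Jacobsthal polynomials: `J 0 = 0`, `J 1 = 1`, `J (n+2) = J (n+1) + v * J n`. -/
def jacobsthal (v : ℕ) : ℕ → ℕ
  | 0 => 0
  | 1 => 1
  | n + 2 => jacobsthal v (n + 1) + v * jacobsthal v n

lemma jacobsthal_pos (v : ℕ) : ∀ n, 0 < jacobsthal v (n + 1) := by
  intro n
  induction n using Nat.strong_induction_on with
  | _ n ih =>
    match n with
    | 0 => simp [jacobsthal]
    | m + 1 =>
      have h := ih m (by omega)
      show 0 < jacobsthal v (m + 2)
      simp only [jacobsthal]
      omega

/-- The `a` integers `t_{y,z} = y(va+b) + z(v·a·J_{k-1}(v) + b·J_k(v))`, for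
`0 ≤ z ≤ q-1, 0 ≤ y ≤ J_k(v)-1` together with `z = q, 0 ≤ y ≤ r-1`, are pairwise
incongruent modulo `a`, and they form a complete residue system modulo `a`. -/
theorem jacobsthal_triple_complete_residue_system
    (v a b k : ℕ) (hv : 0 < v) (ha : 3 ≤ a) (hb : 0 < b) (hk : 3 ≤ k)
    (hab : Nat.gcd a b = 1)
    (q r : ℕ) (hq : q = a / jacobsthal v k) (hr : r = a - q * jacobsthal v k) :
    (∀ y z y' z' : ℕ,
      ((z < q ∧ y < jacobsthal v k) ∨ (z = q ∧ y < r)) →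
      ((z' < q ∧ y' < jacobsthal v k) ∨ (z' = q ∧ y' < r)) →
      (y * (v * a + b) + z * (v * a * jacobsthal v (k - 1) + b * jacobsthal v k)) % a =
        (y' * (v * a + b) + z' * (v * a * jacobsthal v (k - 1) + b * jacobsthal v k)) % a →
      y = y' ∧ z = z') ∧
    (∀ c < a, ∃ y z : ℕ,
      ((z < q ∧ y < jacobsthal v k) ∨ (z = q ∧ y < r)) ∧
      (y * (v * a + b) + z * (v * a * jacobsthal v (k - 1) + b * jacobsthal v k)) % a = c)
    := by
  have ha0 : 0 < a := by omega
  haveI : NeZero a := ⟨by omega⟩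
  set J := jacobsthal v k with hJdef
  set J' := jacobsthal v (k - 1) with hJ'def
  have hJ : 0 < J := by
    obtain ⟨m, hm⟩ : ∃ m, k = m + 1 := ⟨k - 1, by omega⟩
    rw [hJdef, hm]; exact jacobsthal_pos v m
  have hdm := Nat.div_add_mod a J
  have hqJ : q * J = J * (a / J) := by rw [hq, Nat.mul_comm]
  have haqr : a = q * J + r := by omega
  have hr' : r = a % J := by omega
  have hrJ : r < J := by rw [hr']; exact Nat.mod_lt a hJ
  have hcop : Nat.gcd b a = 1 := by rwa [Nat.gcd_comm]
  -- the key mod-a reduction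
  have key : ∀ y z : ℕ,
      (y * (v * a + b) + z * (v * a * J' + b * J)) % a = (b * (y + z * J)) % a := by
    intro y z
    have h : y * (v * a + b) + z * (v * a * J' + b * J)
        = b * (y + z * J) + a * (v * y + v * J' * z) := by ring
    rw [h, Nat.add_mul_mod_self_left]
  have hlt : ∀ y z : ℕ, ((z < q ∧ y < J) ∨ (z = q ∧ y < r)) → y + z * J < a := by
    intro y z h
    rcases h with ⟨hz, hy⟩ | ⟨hz, hy⟩
    · have h1 : (z + 1) * J ≤ q * J := Nat.mul_le_mul_right J (by omega)
      have h2 : (z + 1) * J = z * J + J := by ring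
      omega
    · subst hz; omega
  constructor
  · intro y z y' z' h h' heq
    rw [key, key] at heq
    have hs : y + z * J < a := hlt y z h
    have hs' : y' + z' * J < a := hlt y' z' h'
    have hmod : y + z * J ≡ y' + z' * J [MOD a] :=
      Nat.ModEq.cancel_left_of_coprime (by rwa [Nat.gcd_comm] at hcop) heq
    have hss : y + z * J = y' + z' * J := by
      have h2 := hmod
      unfold Nat.ModEq at h2
      rwa [Nat.mod_eq_of_lt hs, Nat.mod_eq_of_lt hs'] at h2
    have hyJ : y < J := by rcases h with ⟨_, h1⟩ | ⟨_, h1⟩ <;> omega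
    have hy'J : y' < J := by rcases h' with ⟨_, h1⟩ | ⟨_, h1⟩ <;> omega
    have e1 : (y + z * J) % J = y := by
      rw [Nat.add_mul_mod_self_right, Nat.mod_eq_of_lt hyJ]
    have e2 : (y' + z' * J) % J = y' := by
      rw [Nat.add_mul_mod_self_right, Nat.mod_eq_of_lt hy'J]
    have e3 : (y + z * J) / J = z := by
      rw [Nat.add_mul_div_right _ _ hJ, Nat.div_eq_of_lt hyJ, Nat.zero_add]
    have e4 : (y' + z' * J) / J = z' := by
      rw [Nat.add_mul_div_right _ _ hJ, Nat.div_eq_of_lt hy'J, Nat.zero_add]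
    constructor
    · rw [← e1, ← e2, hss]
    · rw [← e3, ← e4, hss]
  · intro c hc
    have hbu : IsUnit (b : ZMod a) := by
      rw [ZMod.isUnit_iff_coprime]; exact hcop
    set u : ZMod a := (b : ZMod a)⁻¹ * (c : ZMod a) with hu
    set s : ℕ := u.val with hsdef
    have hsa : s < a := ZMod.val_lt u
    have hbs : (b * s) % a = c := by
      have h1 : ((b * s : ℕ) : ZMod a) = (c : ZMod a) := by
        push_cast
        rw [hsdef, ZMod.natCast_rightInverse u, hu, ← mul_assoc,
          ZMod.mul_inv_of_unit _ hbu, one_mul]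
      have h2 : (b * s) % a = ((b * s : ℕ) : ZMod a).val := by
        rw [ZMod.val_natCast]
      rw [h2, h1, ZMod.val_natCast, Nat.mod_eq_of_lt hc]
    refine ⟨s % J, s / J, ?_, ?_⟩
    · have hzq : s / J ≤ q := by
        rw [hq]; exact Nat.div_le_div_right (Nat.le_of_lt hsa)
      have hdms : J * (s / J) + s % J = s := Nat.div_add_mod s J
      rcases Nat.lt_or_ge (s / J) q with hlt' | hge
      · exact Or.inl ⟨hlt', Nat.mod_lt s hJ⟩
      · have hzq' : s / J = q := by omega
        refine Or.inr ⟨hzq', ?_⟩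
        have : J * (s / J) = q * J := by rw [hzq', Nat.mul_comm]
        omega
    · rw [key]
      have hdms : J * (s / J) + s % J = s := Nat.div_add_mod s J
      have hcomm : s / J * J = J * (s / J) := Nat.mul_comm _ _
      have : s % J + s / J * J = s := by omega
      rw [this, hbs]
end

section
/- Let k ≥ 2, let a₁,…,a_k be positive integers, and let p be a nonnegative integer. Then the complement ℕ∖S_p(a₁,…,a_k) is finite if and only if gcd(a₁,…,a_k) = 1. -/
/-- Bezout for finitely many naturals. -/
lemma bezout_range (a : ℕ → ℕ) : ∀ m : ℕ, ∃ c : ℕ → ℤ,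
    ∑ i ∈ Finset.range m, c i * (a i : ℤ) = (((Finset.range m).gcd a : ℕ) : ℤ) := by
  intro m
  induction m with
  | zero => exact ⟨0, by simp⟩
  | succ m ih =>
    obtain ⟨c, hc⟩ := ih
    have hg : (Finset.range (m+1)).gcd a = Nat.gcd (a m) ((Finset.range m).gcd a) := by
      rw [Finset.range_add_one, Finset.gcd_insert]; rfl
    set A := Nat.gcdA (a m) ((Finset.range m).gcd a) with hA
    set B := Nat.gcdB (a m) ((Finset.range m).gcd a) with hB
    refine ⟨fun i => if i = m then A else c i * B, ?_⟩
    rw [hg, Finset.sum_range_succ, Nat.gcd_eq_gcd_ab]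
    have h1 : ∑ x ∈ Finset.range m,
        (if x = m then A else c x * B) * (a x : ℤ)
        = (∑ i ∈ Finset.range m, c i * (a i : ℤ)) * B := by
      rw [Finset.sum_mul]
      refine Finset.sum_congr rfl (fun i hi => ?_)
      rw [if_neg (Nat.ne_of_lt (Finset.mem_range.mp hi))]; ring
    rw [h1, hc]; simp only [if_true, eq_self_iff_true, hA, hB]
    ring

lemma sum_single_mul {k : ℕ} (b : Fin k → ℕ) (i0 : Fin k) (m : ℕ) :
    ∑ i : Fin k, (Pi.single i0 m : Fin k → ℕ) i * b i = m * b i0 := by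
  rw [Fintype.sum_eq_single i0 (fun x hx => by simp [Pi.single_eq_of_ne hx])]
  simp

/-- The complement `ℕ ∖ S_p` of the `p`-numerical semigroup is finite if and only if
the generators are coprime. -/
theorem pNumericalSemigroup_compl_finite_iff (k : ℕ) (hk : 2 ≤ k) (a : ℕ → ℕ)
    (hapos : ∀ i < k, 0 < a i) (p : ℕ) :
    {n : ℕ | denum k a n ≤ p}.Finite ↔ (Finset.range k).gcd a = 1 := by
  constructor
  · -- finite → gcd = 1
    intro hfin
    by_contra hne
    set g := (Finset.range k).gcd a with hgdef
    have hdvd0 : g ∣ a 0 := Finset.gcd_dvd (Finset.mem_range.mpr (by omega))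
    have hg0 : 0 < g := by
      rcases Nat.eq_zero_or_pos g with h | h
      · rw [h] at hdvd0
        exact absurd (Nat.eq_zero_of_zero_dvd hdvd0) (hapos 0 (by omega)).ne'
      · exact h
    have hg2 : 2 ≤ g := by omega
    have key : ∀ m : ℕ, (g * m + 1) ∈ {n | denum k a n ≤ p} := by
      intro m
      have he : IsEmpty {x : Fin k → ℕ // ∑ i : Fin k, x i * a i.1 = g * m + 1} := by
        constructor
        rintro ⟨x, hx⟩
        have hd : g ∣ g * m + 1 := by
          rw [← hx]
          exact Finset.dvd_sum fun i _ =>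
            Dvd.dvd.mul_left (Finset.gcd_dvd (Finset.mem_range.mpr i.2)) _
        have h1 : g = 1 := Nat.dvd_one.mp ((Nat.dvd_add_right ⟨m, rfl⟩).mp hd)
        omega
      simp only [Set.mem_setOf_eq, denum]
      rw [Nat.card_of_isEmpty]
      omega
    have hinj : Function.Injective (fun m : ℕ => g * m + 1) := by
      intro m1 m2 h
      simp only [add_left_inj] at h
      exact Nat.eq_of_mul_eq_mul_left hg0 h
    exact (Set.infinite_of_injective_forall_mem hinj key) hfin
  · -- gcd = 1 → finite
    intro hgcd
    obtain ⟨c, hc⟩ := bezout_range a k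
    rw [hgcd, Nat.cast_one] at hc
    set u := ∑ i ∈ Finset.range k, (c i).toNat * a i with hu
    set v := ∑ i ∈ Finset.range k, (-(c i)).toNat * a i with hv
    have huv : (u : ℤ) - (v : ℤ) = 1 := by
      rw [hu, hv]
      push_cast
      rw [← Finset.sum_sub_distrib, ← hc]
      refine Finset.sum_congr rfl fun i _ => ?_
      rw [← sub_mul, Int.toNat_sub_toNat_neg]
    have huv' : u = v + 1 := by omega
    -- representability
    set R : ℕ → Prop := fun n => ∃ x : Fin k → ℕ, ∑ i : Fin k, x i * a i.1 = n with hR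
    have hRu : R u := ⟨fun i => (c i.1).toNat,
      Fin.sum_univ_eq_sum_range (fun i => (c i).toNat * a i) k⟩
    have hRv : R v := ⟨fun i => (-(c i.1)).toNat,
      Fin.sum_univ_eq_sum_range (fun i => (-(c i)).toNat * a i) k⟩
    have hadd : ∀ m m', R m → R m' → R (m + m') := by
      rintro m m' ⟨x, hx⟩ ⟨y, hy⟩
      exact ⟨x + y, by simp only [Pi.add_apply, add_mul, Finset.sum_add_distrib, hx, hy]⟩
    have hsmul : ∀ t m, R m → R (t * m) := by
      rintro t m ⟨x, hx⟩
      refine ⟨fun i => t * x i, ?_⟩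
      rw [← hx, Finset.mul_sum]
      exact Finset.sum_congr rfl (fun i _ => by ring)
    have hrep : ∀ n, v * v ≤ n → R n := by
      intro n hn
      rcases Nat.eq_zero_or_pos v with hv0 | hv0
      · have hu1 : u = 1 := by omega
        have := hsmul n u hRu
        rwa [hu1, mul_one] at this
      · set q := n / v with hq
        set r := n % v with hr
        have hqr : q * v + r = n := Nat.div_add_mod' n v
        have hrv : r < v := Nat.mod_lt _ hv0
        have hvq : v ≤ q := by
          rw [hq]
          exact Nat.le_div_iff_mul_le hv0 |>.mpr hn
        obtain ⟨t, ht⟩ : ∃ t, q = t + r := ⟨q - r, by omega⟩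
        have hcalc : t * v + r * u = n := by
          rw [huv']
          calc t * v + r * (v + 1) = (t + r) * v + r := by ring
            _ = n := by rw [← ht, hqr]
        rw [← hcalc]
        exact hadd _ _ (hsmul t v hRv) (hsmul r u hRu)
    -- finiteness of solution sets
    have hfinsol : ∀ n : ℕ, Finite {x : Fin k → ℕ // ∑ i : Fin k, x i * a i.1 = n} := by
      intro n
      have hsub : {x : Fin k → ℕ | ∑ i : Fin k, x i * a i.1 = n} ⊆
          Set.pi Set.univ (fun _ : Fin k => Set.Iic n) := by
        intro x hx i _
        simp only [Set.mem_Iic]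
        calc x i ≤ x i * a i.1 := Nat.le_mul_of_pos_right _ (hapos i.1 i.2)
          _ ≤ ∑ j : Fin k, x j * a j.1 :=
              Finset.single_le_sum (f := fun j : Fin k => x j * a j.1)
                (fun j _ => Nat.zero_le _) (Finset.mem_univ i)
          _ = n := hx
      exact ((Set.Finite.pi fun _ => Set.finite_Iic n).subset hsub).to_subtype
    -- main bound
    have hbig : ∀ n, v * v + (p + 1) * (a 0 * a 1) ≤ n → p < denum k a n := by
      intro n hn
      obtain ⟨z, hz⟩ := hrep (n - (p + 1) * (a 0 * a 1)) (by omega)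
      have h1k : 1 < k := by omega
      set i0 : Fin k := ⟨0, by omega⟩ with hi0
      set i1 : Fin k := ⟨1, h1k⟩ with hi1
      have hne01 : i0 ≠ i1 := by simp [hi0, hi1, Fin.ext_iff]
      have ha1 : 0 < a 1 := hapos 1 h1k
      set F : Fin (p + 2) → {x : Fin k → ℕ // ∑ i : Fin k, x i * a i.1 = n} :=
        fun j => ⟨z + Pi.single i0 (j.1 * a 1) + Pi.single i1 ((p + 1 - j.1) * a 0), by
          obtain ⟨t, ht⟩ : ∃ t, j.1 + t = p + 1 := ⟨p + 1 - j.1, by omega⟩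
          have hts : p + 1 - j.1 = t := by omega
          rw [hts]
          simp only [Pi.add_apply, add_mul, Finset.sum_add_distrib, hz, sum_single_mul]
          have e0 : a (i0 : ℕ) = a 0 := rfl
          have e1 : a (i1 : ℕ) = a 1 := rfl
          rw [e0, e1]
          have h2 : j.1 * a 1 * a 0 + t * a 0 * a 1 = (p + 1) * (a 0 * a 1) := by
            rw [← ht]; ring
          rw [add_assoc, h2,
            show p * (a 0 * a 1) + 1 * (a 0 * a 1) = (p + 1) * (a 0 * a 1) from by ring]
          exact Nat.sub_add_cancel (le_trans (Nat.le_add_left _ _) hn)⟩ with hF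
      have hFinj : Function.Injective F := by
        intro j j' h
        have heval := congrArg (fun x : {x : Fin k → ℕ // ∑ i : Fin k, x i * a i.1 = n} =>
          (x : Fin k → ℕ) i0) h
        simp only [hF, Pi.add_apply, Pi.single_eq_same,
          Pi.single_eq_of_ne hne01] at heval
        have h3 : j.1 * a 1 = j'.1 * a 1 := by omega
        exact Fin.ext (Nat.eq_of_mul_eq_mul_right ha1 h3)
      have hcard : p + 2 ≤ denum k a n := by
        haveI := hfinsol n
        have := Nat.card_le_card_of_injective F hFinj
        simpa [denum] using this
      omega
    refine Set.Finite.subset (Set.finite_Iio (v * v + (p + 1) * (a 0 * a 1))) ?_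
    intro n hn
    simp only [Set.mem_setOf_eq] at hn
    by_contra hlt
    simp only [Set.mem_Iio, not_lt] at hlt
    exact absurd hn (by simpa using (hbig n hlt).not_ge)
end

section
/- For the triple (2,5,7): the integer 43 satisfies d(43; 2,5,7) = 17 and every integer n > 43 has d(n; 2,5,7) ≠ 17, while the integer 42 satisfies d(42; 2,5,7) = 18 and every integer n > 42 has d(n; 2,5,7) ≠ 18. In particular, the largest integer with exactly 17 representations is strictly greater than the largest integer with exactly 18 representations. -/
/-!
Shifting `x ↦ x + 1` embeds the representations of `n` into those of `n + a`, so
`d(n; a, b, c)` is nondecreasing along residue classes mod `a`. For `(2, 5, 7)` the two values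
`d(44) = d(45) = 19` therefore give `d(n) ≥ 19` for all `n ≥ 44`, and only `d(42) = 18` and
`d(43) = 17` remain, which are finite computations.
-/

open Finset

/-- Bounding each coordinate by `n / a`, `n / b`, `n / c` makes the representations a finset. -/
def denum3Finset (a b c n : ℕ) : Finset (ℕ × ℕ × ℕ) :=
  (range (n / a + 1) ×ˢ range (n / b + 1) ×ˢ range (n / c + 1)).filter
    fun t => t.1 * a + t.2.1 * b + t.2.2 * c = n

section

variable {a b c : ℕ}

theorem mem_denum3Finset (ha : 0 < a) (hb : 0 < b) (hc : 0 < c) {n : ℕ} {t : ℕ × ℕ × ℕ} :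
    t ∈ denum3Finset a b c n ↔ t.1 * a + t.2.1 * b + t.2.2 * c = n := by
  simp only [denum3Finset, mem_filter, mem_product, mem_range, Nat.lt_succ_iff,
    Nat.le_div_iff_mul_le ha, Nat.le_div_iff_mul_le hb, Nat.le_div_iff_mul_le hc]
  exact ⟨And.right, fun h => ⟨⟨by omega, by omega, by omega⟩, h⟩⟩

theorem denum3_eq_card_denum3Finset (ha : 0 < a) (hb : 0 < b) (hc : 0 < c) (n : ℕ) :
    denum3 a b c n = #(denum3Finset a b c n) :=
  Nat.subtype_card _ fun _ => mem_denum3Finset ha hb hc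

theorem denum3_le_denum3_add (ha : 0 < a) (hb : 0 < b) (hc : 0 < c) (n : ℕ) :
    denum3 a b c n ≤ denum3 a b c (n + a) := by
  rw [denum3_eq_card_denum3Finset ha hb hc, denum3_eq_card_denum3Finset ha hb hc]
  refine card_le_card_of_injOn (fun t => (t.1 + 1, t.2)) (fun t ht => ?_) fun s _ t _ h => ?_
  · rw [mem_coe, mem_denum3Finset ha hb hc] at ht ⊢
    rw [← ht]
    ring
  · simp only [Prod.mk.injEq, add_left_inj] at h
    exact Prod.ext h.1 h.2

end

theorem le_apply_of_forall_Ico_of_le_apply_add {f : ℕ → ℕ} {a m B : ℕ} (ha : 0 < a)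
    (hf : ∀ n, f n ≤ f (n + a)) (hB : ∀ n ∈ Ico m (m + a), B ≤ f n) {n : ℕ} (hn : m ≤ n) :
    B ≤ f n := by
  induction n using Nat.strong_induction_on with
  | _ n ih =>
    by_cases hlt : n < m + a
    · exact hB n (mem_Ico.2 ⟨hn, hlt⟩)
    · obtain ⟨k, rfl⟩ : ∃ k, n = k + a := ⟨n - a, by omega⟩
      exact (ih k (by omega) (by omega)).trans (hf k)

/-- For the triple `(2,5,7)`: `43` has exactly `17` representations and is the largest
such integer, `42` has exactly `18` representations and is the largest such integer;
in particular the largest integer with exactly `17` representations is strictly greater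
than the largest integer with exactly `18` representations. -/
theorem denumerant_257_g17_gt_g18 :
    denum3 2 5 7 43 = 17 ∧ (∀ n : ℕ, 43 < n → denum3 2 5 7 n ≠ 17) ∧
    denum3 2 5 7 42 = 18 ∧ (∀ n : ℕ, 42 < n → denum3 2 5 7 n ≠ 18) ∧
    42 < 43 := by
  have hcard (n : ℕ) : denum3 2 5 7 n = #(denum3Finset 2 5 7 n) :=
    denum3_eq_card_denum3Finset (by norm_num) (by norm_num) (by norm_num) n
  have h42 : denum3 2 5 7 42 = 18 := by rw [hcard]; decide
  have h43 : denum3 2 5 7 43 = 17 := by rw [hcard]; decide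
  have h_ge {n : ℕ} (hn : 44 ≤ n) : 19 ≤ denum3 2 5 7 n := by
    refine le_apply_of_forall_Ico_of_le_apply_add two_pos
      (denum3_le_denum3_add (by norm_num) (by norm_num) (by norm_num)) (fun k hk => ?_) hn
    obtain rfl | rfl : k = 44 ∨ k = 45 := by simp only [mem_Ico] at hk; omega
    all_goals rw [hcard]; decide
  refine ⟨h43, fun n hn => ?_, h42, fun n hn => ?_, by norm_num⟩
  · have := h_ge hn
    omega
  · obtain rfl | hn : n = 43 ∨ 44 ≤ n := by omega
    · rw [h43]; decide
    · have := h_ge hn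
      omega
end
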